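/- arXiv:2601.04685 — 5 statements merged into one kernel-verified Lean document; each statement's English description precedes it below -/
import Mathlib

section
/- Let H_1, …, H_m be bounded self-adjoint operators on a complex Hilbert space with M := max_j ‖H_j‖, let a_1, …, a_m be complex coefficients with ∑_j a_j = 1, set A := ∑_j |a_j| and H̄ := ∑_j a_j H_j. Then for every Δt ≥ 0, ‖∑_j a_j exp(−i Δt H_j) − exp(−i Δt H̄)‖ ≤ (Δt²/2)·‖∑_j a_j H_j² − H̄²‖ + (Δt³ M³/6)·A·e^{Δt M} + (Δt³ A³ M³/6)·e^{A Δt M}. -/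
/-!
The Taylor polynomial `1 + x + x²/2` of `exp` is exact up to a cubic tail of norm at most
`‖x‖³ e^‖x‖ / 6`. Since `∑ a_j = 1`, the constant and linear parts of these polynomials cancel
between `∑ a_j exp x_j` and `exp (∑ a_j x_j)`, leaving the quadratic defect
`(∑ a_j x_j² - (∑ a_j x_j)²) / 2` plus the tails, where `‖x_j‖ ≤ Δt M` and `‖∑ a_j x_j‖ ≤ A Δt M`
for `x_j = -iΔt H_j`.
-/

open NormedSpace Finset Nat

section ExpRemainder

variable {𝕂 𝔸 : Type*} [RCLike 𝕂] [NormedRing 𝔸] [NormedAlgebra 𝕂 𝔸] [CompleteSpace 𝔸]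

theorem norm_exp_sub_sum_range_le (x : 𝔸) {n : ℕ} (hn : 0 < n) :
    ‖exp x - ∑ i ∈ range n, (i ! : 𝕂)⁻¹ • x ^ i‖ ≤ ‖x‖ ^ n / n ! * Real.exp ‖x‖ := by
  have htail : HasSum (fun k ↦ ((k + n)! : 𝕂)⁻¹ • x ^ (k + n))
      (exp x - ∑ i ∈ range n, (i ! : 𝕂)⁻¹ • x ^ i) :=
    (hasSum_nat_add_iff' n).2 (exp_series_hasSum_exp' (𝕂 := 𝕂) x)
  have hexp : HasSum (fun k ↦ ‖x‖ ^ n / n ! * (‖x‖ ^ k / k !)) (‖x‖ ^ n / n ! * Real.exp ‖x‖) := by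
    refine HasSum.mul_left _ ?_
    rw [Real.exp_eq_exp_ℝ]
    exact expSeries_div_hasSum_exp ‖x‖
  refine htail.norm_le_of_bounded hexp fun k ↦ ?_
  have hfact : (k ! * n ! : ℝ) ≤ (k + n)! :=
    mod_cast Nat.le_of_dvd (factorial_pos _) (factorial_mul_factorial_dvd_factorial_add k n)
  calc ‖((k + n)! : 𝕂)⁻¹ • x ^ (k + n)‖
      ≤ ((k + n)! : ℝ)⁻¹ * ‖x‖ ^ (k + n) := by
        rw [norm_smul, norm_inv, RCLike.norm_natCast]
        gcongr
        exact norm_pow_le' x (by omega)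
    _ ≤ (k ! * n ! : ℝ)⁻¹ * ‖x‖ ^ (k + n) := by gcongr
    _ = ‖x‖ ^ n / n ! * (‖x‖ ^ k / k !) := by rw [pow_add]; field_simp

theorem norm_exp_sub_quadratic_le (x : 𝔸) :
    ‖exp x - (1 + x + (2 : 𝕂)⁻¹ • x ^ 2)‖ ≤ ‖x‖ ^ 3 * Real.exp ‖x‖ / 6 := by
  have hsum : ∑ i ∈ range 3, (i ! : 𝕂)⁻¹ • x ^ i = 1 + x + (2 : 𝕂)⁻¹ • x ^ 2 := by
    simp [sum_range_succ, factorial]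
  have h := norm_exp_sub_sum_range_le (𝕂 := 𝕂) x three_pos
  rw [hsum] at h
  exact h.trans_eq (by ring)

theorem norm_exp_sub_quadratic_le_of_norm_le {x : 𝔸} {r : ℝ} (hx : ‖x‖ ≤ r) :
    ‖exp x - (1 + x + (2 : 𝕂)⁻¹ • x ^ 2)‖ ≤ r ^ 3 * Real.exp r / 6 := by
  refine (norm_exp_sub_quadratic_le x).trans ?_
  have hr : 0 ≤ r := (norm_nonneg x).trans hx
  gcongr

end ExpRemainder

theorem sum_smul_quadratic_sub_quadratic_sum {ι 𝕂 𝔸 : Type*} [CommRing 𝕂] [Ring 𝔸]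
    [Algebra 𝕂 𝔸] (s : Finset ι) {a : ι → 𝕂} (ha : ∑ i ∈ s, a i = 1) (x : ι → 𝔸) (c : 𝕂) :
    ∑ i ∈ s, a i • (1 + x i + c • x i ^ 2) - (1 + ∑ i ∈ s, a i • x i + c • (∑ i ∈ s, a i • x i) ^ 2)
      = c • (∑ i ∈ s, a i • x i ^ 2 - (∑ i ∈ s, a i • x i) ^ 2) := by
  have hone : ∑ i ∈ s, a i • (1 : 𝔸) = 1 := by rw [← sum_smul, ha, one_smul]
  simp only [smul_add, sum_add_distrib, hone, smul_comm _ c, ← smul_sum, smul_sub]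
  abel

theorem norm_sum_smul_le_of_norm_le {ι 𝕂 E : Type*} [NormedField 𝕂] [SeminormedAddCommGroup E]
    [NormedSpace 𝕂 E] (s : Finset ι) (a : ι → 𝕂) {x : ι → E} {r : ℝ}
    (hx : ∀ i ∈ s, ‖x i‖ ≤ r) : ‖∑ i ∈ s, a i • x i‖ ≤ (∑ i ∈ s, ‖a i‖) * r := by
  rw [sum_mul]
  refine norm_sum_le_of_le s fun i hi ↦ ?_
  rw [norm_smul]
  exact mul_le_mul_of_nonneg_left (hx i hi) (norm_nonneg _)

section AffineCombination

variable {ι 𝕂 𝔸 : Type*} [RCLike 𝕂] [NormedRing 𝔸] [NormedAlgebra 𝕂 𝔸] [CompleteSpace 𝔸]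

theorem norm_sum_smul_exp_sub_exp_sum_le (s : Finset ι) {a : ι → 𝕂} (ha : ∑ i ∈ s, a i = 1)
    {x : ι → 𝔸} {r : ℝ} (hx : ∀ i ∈ s, ‖x i‖ ≤ r) :
    ‖∑ i ∈ s, a i • exp (x i) - exp (∑ i ∈ s, a i • x i)‖ ≤
      ‖(2 : 𝕂)⁻¹ • (∑ i ∈ s, a i • x i ^ 2 - (∑ i ∈ s, a i • x i) ^ 2)‖ +
        (∑ i ∈ s, ‖a i‖) * (r ^ 3 * Real.exp r / 6) +
        ((∑ i ∈ s, ‖a i‖) * r) ^ 3 * Real.exp ((∑ i ∈ s, ‖a i‖) * r) / 6 := by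
  set xbar := ∑ i ∈ s, a i • x i
  set Q : 𝔸 → 𝔸 := fun y ↦ 1 + y + (2 : 𝕂)⁻¹ • y ^ 2
  have hsplit : ∑ i ∈ s, a i • exp (x i) - exp xbar =
      (2 : 𝕂)⁻¹ • (∑ i ∈ s, a i • x i ^ 2 - xbar ^ 2) +
        (∑ i ∈ s, a i • (exp (x i) - Q (x i)) - (exp xbar - Q xbar)) := by
    rw [← sum_smul_quadratic_sub_quadratic_sum s ha]
    simp only [Q, smul_sub, sum_sub_distrib]
    abel
  have hterms : ‖∑ i ∈ s, a i • (exp (x i) - Q (x i))‖ ≤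
      (∑ i ∈ s, ‖a i‖) * (r ^ 3 * Real.exp r / 6) :=
    norm_sum_smul_le_of_norm_le s a fun i hi ↦ norm_exp_sub_quadratic_le_of_norm_le (hx i hi)
  have hmean : ‖exp xbar - Q xbar‖ ≤
      ((∑ i ∈ s, ‖a i‖) * r) ^ 3 * Real.exp ((∑ i ∈ s, ‖a i‖) * r) / 6 :=
    norm_exp_sub_quadratic_le_of_norm_le (norm_sum_smul_le_of_norm_le s a hx)
  rw [hsplit, add_assoc]
  exact norm_add_le_of_le le_rfl ((norm_sub_le _ _).trans (add_le_add hterms hmean))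

end AffineCombination

theorem short_time_equivalence_error_bound_general {𝓗 : Type*} [NormedAddCommGroup 𝓗]
    [InnerProductSpace ℂ 𝓗] [CompleteSpace 𝓗]
    {m : ℕ} (H : Fin m → 𝓗 →L[ℂ] 𝓗)
    (a : Fin m → ℂ) (ha : ∑ j, a j = 1)
    (M : ℝ) (hM : M = ⨆ j, ‖H j‖)
    (A : ℝ) (hA : A = ∑ j, ‖a j‖)
    (Hbar : 𝓗 →L[ℂ] 𝓗) (hHbar : Hbar = ∑ j, a j • H j) :
    ∀ Δt : ℝ, 0 ≤ Δt →
      ‖(∑ j, a j • exp ((-(Complex.I * (Δt : ℂ))) • H j)) -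
          exp ((-(Complex.I * (Δt : ℂ))) • Hbar)‖ ≤
        Δt ^ 2 / 2 * ‖(∑ j, a j • (H j * H j)) - Hbar * Hbar‖ +
          Δt ^ 3 * M ^ 3 / 6 * A * Real.exp (Δt * M) +
          Δt ^ 3 * A ^ 3 * M ^ 3 / 6 * Real.exp (A * Δt * M) := by
  intro Δt hΔt
  set c : ℂ := -(Complex.I * Δt)
  have hc : ‖c‖ = Δt := by simp [c, abs_of_nonneg hΔt]
  have hH : ∀ j ∈ univ, ‖c • H j‖ ≤ Δt * M := fun j _ ↦ by
    rw [norm_smul, hc, hM]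
    gcongr
    exact le_ciSup (Set.finite_range fun j ↦ ‖H j‖).bddAbove j
  have hcHbar : c • Hbar = ∑ j, a j • c • H j := by
    simp only [hHbar, smul_sum, smul_comm c]
  have hsecond : (2 : ℂ)⁻¹ • (∑ j, a j • (c • H j) ^ 2 - (c • Hbar) ^ 2) =
      ((2 : ℂ)⁻¹ * c ^ 2) • ((∑ j, a j • (H j * H j)) - Hbar * Hbar) := by
    simp only [smul_pow, smul_comm (a _) (c ^ 2), ← smul_sum, ← smul_sub, mul_smul]
    simp only [sq]
  have key := norm_sum_smul_exp_sub_exp_sum_le univ ha hH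
  rw [← hcHbar, hsecond, norm_smul, ← hA] at key
  refine key.trans_eq ?_
  simp only [norm_mul, norm_inv, norm_pow, hc, RCLike.norm_ofNat, ← mul_assoc]
  ring

/-- **Proposition 1, explicit remainder.** For bounded self-adjoint
operators `H₁, …, H_m` with `M = max_j ‖H_j‖`, complex coefficients with `∑ a_j = 1`,
`A = ∑ |a_j|` and `H̄ = ∑ a_j H_j`, for every `Δt ≥ 0`:
`‖∑ a_j exp(−iΔtH_j) − exp(−iΔtH̄)‖ ≤ (Δt²/2)‖∑ a_j H_j² − H̄²‖
  + (Δt³M³/6)·A·e^{ΔtM} + (Δt³A³M³/6)·e^{AΔtM}`. -/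
theorem short_time_equivalence_error_bound {𝓗 : Type*} [NormedAddCommGroup 𝓗]
    [InnerProductSpace ℂ 𝓗] [CompleteSpace 𝓗]
    {m : ℕ} (H : Fin m → 𝓗 →L[ℂ] 𝓗) (hH : ∀ j, IsSelfAdjoint (H j))
    (a : Fin m → ℂ) (ha : ∑ j, a j = 1)
    (M : ℝ) (hM : M = ⨆ j, ‖H j‖)
    (A : ℝ) (hA : A = ∑ j, ‖a j‖)
    (Hbar : 𝓗 →L[ℂ] 𝓗) (hHbar : Hbar = ∑ j, a j • H j) :
    ∀ Δt : ℝ, 0 ≤ Δt →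
      ‖(∑ j, a j • exp ((-(Complex.I * (Δt : ℂ))) • H j)) -
          exp ((-(Complex.I * (Δt : ℂ))) • Hbar)‖ ≤
        Δt ^ 2 / 2 * ‖(∑ j, a j • (H j * H j)) - Hbar * Hbar‖ +
          Δt ^ 3 * M ^ 3 / 6 * A * Real.exp (Δt * M) +
          Δt ^ 3 * A ^ 3 * M ^ 3 / 6 * Real.exp (A * Δt * M) :=
  short_time_equivalence_error_bound_general H a ha M hM A hA Hbar hHbar
end

section
/- Let H be a bounded self-adjoint operator on a complex Hilbert space, and let σ > 0 and Δt ∈ ℝ. Then the Bochner integral of the operator-valued Gaussian superposition of time translations equals the regulated step: ∫_ℝ (2πσ²)^{−1/2} · exp(−(u − 1)²/(2σ²)) · exp(−i u Δt H) du = exp(−i Δt H) · exp(−(σ² Δt²/2) H²), where the integral is taken in the Banach space of bounded operators. -/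
/-!
Put `A = -(iΔt) • H`, a normal operator, so that the integrand is `g_σ(u) exp(u A)`, i.e. the
integral is `∫ exp(u A) dN(1, σ²)(u)`. In the continuous functional calculus of `A` this is
`cfc (z ↦ e^{uz}) A`, and the integral commutes with `cfc` because `|e^{uz}| ≤ e^{ru} + e^{-ru}`
on the spectrum, a bound integrable against the Gaussian. The scalar integral is the complex
moment generating function `e^{z + σ²z²/2}` of `N(1, σ²)`, and `cfc` turns it back into
`exp A * exp((σ²/2) A²)`.
-/

open MeasureTheory NormedSpace Real ProbabilityTheory
open scoped NNReal

theorem norm_cexp_ofReal_mul_le {r : ℝ} {z : ℂ} (hz : ‖z‖ ≤ r) (u : ℝ) :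
    ‖Complex.exp (u * z)‖ ≤ rexp (r * u) + rexp (-r * u) := by
  have hre : u * z.re ≤ |r * u| := calc
    u * z.re ≤ |u| * |z.re| := by rw [← abs_mul]; exact le_abs_self _
    _ ≤ |u| * r := by gcongr; exact (Complex.abs_re_le_norm z).trans hz
    _ = |r * u| := by rw [abs_mul, abs_of_nonneg ((norm_nonneg z).trans hz), mul_comm]
  rw [Complex.norm_exp, Complex.re_ofReal_mul]
  refine (exp_le_exp.mpr hre).trans ?_
  rcases abs_choice (r * u) with h | h <;> rw [h]
  · exact le_add_of_nonneg_right (exp_nonneg _)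
  · rw [neg_mul]; exact le_add_of_nonneg_left (exp_nonneg _)

theorem integral_cexp_ofReal_mul_gaussianReal (μ : ℝ) (v : ℝ≥0) (z : ℂ) :
    ∫ u, Complex.exp (u * z) ∂gaussianReal μ v = Complex.exp (μ * z + v / 2 * (z * z)) := by
  have h := complexMGF_id_gaussianReal (μ := μ) (v := v) z
  simp only [complexMGF, id] at h
  simp_rw [mul_comm _ z, h]
  ring_nf

section CStarAlgebra

variable {A : Type*} [CStarAlgebra A]

theorem exp_cfc_eq_cfc_cexp (f : ℂ → ℂ) (a : A) [IsStarNormal a]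
    (hf : ContinuousOn f (spectrum ℂ a) := by cfc_cont_tac) :
    NormedSpace.exp (cfc f a) = cfc (fun z => Complex.exp (f z)) a := by
  rw [cfc_comp' Complex.exp f a, CFC.complex_exp_eq_normedSpace_exp]

theorem exp_smul_eq_cfc (c : ℂ) (a : A) [IsStarNormal a] :
    NormedSpace.exp (c • a) = cfc (fun z => Complex.exp (c * z)) a := by
  rw [← exp_cfc_eq_cfc_cexp (c * ·) a, cfc_const_mul_id c a]

theorem exp_smul_mul_self_eq_cfc (c : ℂ) (a : A) [IsStarNormal a] :
    NormedSpace.exp (c • (a * a)) = cfc (fun z => Complex.exp (c * (z * z))) a := by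
  rw [← exp_cfc_eq_cfc_cexp (fun z => c * (z * z)) a, cfc_const_mul c (fun z => z * z) a,
    cfc_mul (fun z => z) (fun z => z) a, cfc_id' ℂ a]

theorem integral_exp_smul_gaussianReal (a : A) [IsStarNormal a] (μ : ℝ) (v : ℝ≥0) :
    ∫ u, NormedSpace.exp ((u : ℂ) • a) ∂gaussianReal μ v =
      NormedSpace.exp ((μ : ℂ) • a) * NormedSpace.exp (((v : ℂ) / 2) • (a * a)) := by
  simp_rw [exp_smul_eq_cfc, exp_smul_mul_self_eq_cfc]
  let r := ‖a‖ * ‖(1 : A)‖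
  rw [← cfc_mul _ _ a, ← cfc_integral _ (fun u => rexp (r * u) + rexp (-r * u)) a]
  · simp_rw [integral_cexp_ofReal_mul_gaussianReal, Complex.exp_add]
  · fun_prop
  · exact .of_forall fun u z hz => norm_cexp_ofReal_mul_le
      (mem_closedBall_zero_iff.mp (spectrum.subset_closedBall_norm_mul a hz)) u
  · exact ((integrable_exp_mul_gaussianReal _).add (integrable_exp_mul_gaussianReal _)).2

end CStarAlgebra

theorem gaussianPDFReal_toNNReal_sq (μ σ u : ℝ) :
    gaussianPDFReal μ (σ ^ 2).toNNReal u =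
      (2 * π * σ ^ 2) ^ (-(1 : ℝ) / 2) * rexp (-(u - μ) ^ 2 / (2 * σ ^ 2)) := by
  rw [gaussianPDFReal_def, Real.coe_toNNReal _ (sq_nonneg σ), neg_div, rpow_neg (by positivity),
    ← sqrt_eq_rpow]

/-- Gaussian superposition of time translations: for a bounded
self-adjoint `H`, `σ > 0` and `Δt ∈ ℝ`, the Bochner integral (in the Banach space of
bounded operators) satisfies
`∫ g_σ(u) exp(−iuΔtH) du = exp(−iΔtH) · exp(−(σ²Δt²/2) H²)`,
with `g_σ(u) = (2πσ²)^{−1/2} e^{−(u−1)²/(2σ²)}`. -/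
theorem gaussian_superposition_of_time_translations {𝓗 : Type*} [NormedAddCommGroup 𝓗]
    [InnerProductSpace ℂ 𝓗] [CompleteSpace 𝓗]
    (H : 𝓗 →L[ℂ] 𝓗) (hH : IsSelfAdjoint H) (σ Δt : ℝ) (hσ : 0 < σ) :
    ∫ u : ℝ,
        ((2 * π * σ ^ 2) ^ (-(1 : ℝ) / 2) * Real.exp (-(u - 1) ^ 2 / (2 * σ ^ 2))) •
          NormedSpace.exp ((-(Complex.I * (u : ℂ) * (Δt : ℂ))) • H) =
      NormedSpace.exp ((-(Complex.I * (Δt : ℂ))) • H) *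
        NormedSpace.exp (((-(σ ^ 2 * Δt ^ 2 / 2) : ℝ) : ℂ) • (H * H)) := by
  have hv : (σ ^ 2).toNNReal ≠ 0 := by positivity
  have : IsStarNormal H := hH.isStarNormal
  have hexp (u : ℝ) : -(Complex.I * u * Δt) • H = (u : ℂ) • (-(Complex.I * Δt) • H) := by
    rw [smul_smul]; ring_nf
  have hsq : ((-(σ ^ 2 * Δt ^ 2 / 2) : ℝ) : ℂ) • (H * H) =
      (((σ ^ 2).toNNReal : ℂ) / 2) • ((-(Complex.I * Δt) • H) * (-(Complex.I * Δt) • H)) := by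
    rw [smul_mul_smul_comm, smul_smul, Real.coe_toNNReal _ (sq_nonneg σ)]
    congr 1
    push_cast
    linear_combination (-(σ ^ 2 * Δt ^ 2 / 2) : ℂ) * Complex.I_sq
  simp_rw [hexp, hsq, ← gaussianPDFReal_toNNReal_sq, ← integral_gaussianReal_eq_integral_smul hv,
    integral_exp_smul_gaussianReal, Complex.ofReal_one, one_smul]
end

section
/- Let H be a bounded self-adjoint operator on a complex Hilbert space, σ, Δt ∈ ℝ, and define V := exp(−i Δt H) · exp(−(σ² Δt²/2) H²). Then for every natural number N and every vector ψ, the N-step success probability satisfies ‖V^N ψ‖² = ⟨ψ, exp(−N σ² Δt² H²) ψ⟩. -/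
/-!
`V` is a unitary `U = exp(−i Δt H)` times a self-adjoint `P = exp(−(σ² Δt²/2) H²)`, and the two
commute since both are functions of `H`. Hence `(V^N)* V^N = P^N (U*)^N U^N P^N = P^{2N}`, and
`P^{2N} = exp(−N σ² Δt² H²)`; finally `‖V^N ψ‖² = ⟨ψ, (V^N)* V^N ψ⟩`.
-/

open NormedSpace

theorem star_mul_self_pow_of_commute {M : Type*} [Monoid M] [StarMul M] {U P : M}
    (hU : U ∈ unitary M) (hP : IsSelfAdjoint P) (hUP : Commute U P) (n : ℕ) :
    star ((U * P) ^ n) * (U * P) ^ n = P ^ (2 * n) := by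
  rw [hUP.mul_pow, star_mul, (hP.pow n).star_eq, mul_assoc, ← mul_assoc (star _),
    Unitary.star_mul_self_of_mem (pow_mem hU n), one_mul, two_mul, pow_add]

section ComplexBanachAlgebra

variable {A : Type*} [NormedRing A] [NormedAlgebra ℂ A]

theorem exp_smul_pow [CompleteSpace A] (z : ℂ) (a : A) (n : ℕ) :
    exp (z • a) ^ n = exp ((n * z) • a) := by
  let : NormedAlgebra ℚ A := .restrictScalars ℚ ℂ A
  rw [← exp_nsmul, mul_smul, Nat.cast_smul_eq_nsmul]

variable [StarRing A] [ContinuousStar A] [StarModule ℂ A] {a : A}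

theorem exp_smul_mem_unitary [CompleteSpace A] (ha : IsSelfAdjoint a) {z : ℂ}
    (hz : star z = -z) : exp (z • a) ∈ unitary A :=
  let : NormedAlgebra ℚ A := .restrictScalars ℚ ℂ A
  exp_mem_unitary_of_mem_skewAdjoint (ha.smul_mem_skewAdjoint hz)

theorem isSelfAdjoint_exp_ofReal_smul (ha : IsSelfAdjoint a) (r : ℝ) :
    IsSelfAdjoint (exp ((r : ℂ) • a)) :=
  (IsSelfAdjoint.smul (Complex.conj_ofReal r) ha).exp

end ComplexBanachAlgebra

theorem ofReal_norm_apply_sq_eq_inner_star_mul_self {E : Type*} [NormedAddCommGroup E]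
    [InnerProductSpace ℂ E] [CompleteSpace E] (A : E →L[ℂ] E) (x : E) :
    ((‖A x‖ ^ 2 : ℝ) : ℂ) = inner ℂ x ((star A * A) x) := by
  rw [mul_apply_eq_comp, ContinuousLinearMap.star_eq_adjoint,
    ContinuousLinearMap.adjoint_inner_right, inner_self_eq_norm_sq_to_K]
  norm_cast

/-- For the regulated step `V = exp(−i Δt H) · exp(−(σ² Δt²/2) H²)`,
the `N`-step success probability satisfies `‖V^N ψ‖² = ⟨ψ, exp(−N σ² Δt² H²) ψ⟩`. -/
theorem regulated_step_pow_success_probability {𝓗 : Type*} [NormedAddCommGroup 𝓗]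
    [InnerProductSpace ℂ 𝓗] [CompleteSpace 𝓗]
    (H : 𝓗 →L[ℂ] 𝓗) (hH : IsSelfAdjoint H) (σ Δt : ℝ)
    (V : 𝓗 →L[ℂ] 𝓗)
    (hV : V = NormedSpace.exp ((-(Complex.I * (Δt : ℂ))) • H) *
      NormedSpace.exp (((-(σ ^ 2 * Δt ^ 2 / 2) : ℝ) : ℂ) • (H * H))) :
    ∀ (N : ℕ) (ψ : 𝓗), ((‖(V ^ N) ψ‖ ^ 2 : ℝ) : ℂ) =
      inner ℂ ψ ((NormedSpace.exp (((-((N : ℝ) * σ ^ 2 * Δt ^ 2) : ℝ) : ℂ) • (H * H))) ψ) := by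
  intro N ψ
  have hU : exp ((-(Complex.I * Δt)) • H) ∈ unitary (𝓗 →L[ℂ] 𝓗) :=
    exp_smul_mem_unitary hH (by simp)
  have hP := isSelfAdjoint_exp_ofReal_smul ((hH.commute_iff hH).1 (.refl H))
    (-(σ ^ 2 * Δt ^ 2 / 2))
  have hUP : Commute (exp ((-(Complex.I * Δt)) • H))
      (exp (((-(σ ^ 2 * Δt ^ 2 / 2) : ℝ) : ℂ) • (H * H))) :=
    (((Commute.refl H).mul_right (.refl H)).smul_left _ |>.smul_right _).exp
  rw [ofReal_norm_apply_sq_eq_inner_star_mul_self, hV, star_mul_self_pow_of_commute hU hP hUP,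
    exp_smul_pow]
  congr 4
  push_cast
  ring
end

section
/- Let H be a bounded self-adjoint operator on a complex Hilbert space, σ ∈ ℝ, and t > 0. For each positive integer N set Δt := t/N and V_N := exp(−i Δt H) · exp(−(σ² Δt²/2) H²). Then ‖(V_N)^N − exp(−i t H)‖ ≤ (σ² t²/(2N)) · ‖H‖², where ‖·‖ is the operator norm. -/
/-!
Since `H` commutes with `H * H`, the two exponentials in one step commute, so the `N`-th power
of the step is `exp (-i t H) * exp (-(σ² t² / (2N)) H²)`. The first factor is unitary and the
second is the exponential of a nonpositive operator `B`, for which the functional calculus and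
`|eˣ - 1| ≤ -x` on `x ≤ 0` give `‖exp B - 1‖ ≤ ‖B‖`.
-/

open NormedSpace

lemma Real.abs_exp_sub_one_le_neg {x : ℝ} (hx : x ≤ 0) : |Real.exp x - 1| ≤ -x := by
  rw [abs_sub_comm, abs_of_nonneg (by linarith [Real.exp_le_one_iff.mpr hx])]
  linarith [Real.add_one_le_exp x]

lemma exp_mul_exp_pow_of_commute {𝔸 : Type*} [NormedRing 𝔸] [NormedAlgebra ℚ 𝔸]
    [CompleteSpace 𝔸] {x y : 𝔸} (h : Commute x y) (n : ℕ) :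
    (exp x * exp y) ^ n = exp (n • x) * exp (n • y) := by
  rw [h.exp.mul_pow, exp_nsmul, exp_nsmul]

section CStarAlgebra

variable {A : Type*} [CStarAlgebra A]

lemma norm_exp_sub_one_le_norm_of_nonpos [PartialOrder A] [StarOrderedRing A] {a : A}
    (ha : a ≤ 0) : ‖exp a - 1‖ ≤ ‖a‖ := by
  nontriviality A
  have ha_sa : IsSelfAdjoint a := by simpa using (IsSelfAdjoint.of_nonneg (neg_nonneg.mpr ha)).neg
  have hspec : ∀ x ∈ spectrum ℝ a, x ≤ 0 := by
    simpa using (le_algebraMap_iff_spectrum_le (r := (0 : ℝ)) ha_sa).mp (by simpa using ha)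
  rw [← CFC.real_exp_eq_normedSpace_exp ha_sa, ← cfc_const_one ℝ a, ← cfc_sub Real.exp _ a]
  refine norm_cfc_le (norm_nonneg a) fun x hx => ?_
  calc ‖Real.exp x - 1‖ ≤ -x := Real.abs_exp_sub_one_le_neg (hspec x hx)
    _ ≤ ‖x‖ := neg_le_abs x
    _ ≤ ‖a‖ := spectrum.norm_le_norm_of_mem hx

lemma norm_exp_neg_smul_mul_self_sub_one_le [PartialOrder A] [StarOrderedRing A] {H : A}
    (hH : IsSelfAdjoint H) {c : ℝ} (hc : 0 ≤ c) :
    ‖exp (((-c : ℝ) : ℂ) • (H * H)) - 1‖ ≤ c * ‖H‖ ^ 2 := by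
  have hnonpos : (-c) • (H * H) ≤ 0 := by
    simpa only [hH.star_eq] using
      smul_nonpos_of_nonpos_of_nonneg (neg_nonpos.mpr hc) (star_mul_self_nonneg H)
  calc ‖exp (((-c : ℝ) : ℂ) • (H * H)) - 1‖ ≤ ‖(-c) • (H * H)‖ := by
        rw [Complex.coe_smul]
        exact norm_exp_sub_one_le_norm_of_nonpos hnonpos
    _ = c * ‖H‖ ^ 2 := by rw [norm_smul, hH.norm_mul_self, norm_neg, Real.norm_of_nonneg hc]

lemma exp_neg_I_mul_smul_mem_unitary {H : A} (hH : IsSelfAdjoint H) (s : ℝ) :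
    exp ((-(Complex.I * s)) • H) ∈ unitary A :=
  let +nondep : NormedAlgebra ℚ A := .restrictScalars ℚ ℂ A
  exp_mem_unitary_of_mem_skewAdjoint <| IsSelfAdjoint.smul_mem_skewAdjoint
    (by simp [skewAdjoint.mem_iff, Complex.conj_ofReal]) hH

lemma norm_unitary_mul_sub_self {U : A} (hU : U ∈ unitary A) (x : A) :
    ‖U * x - U‖ = ‖x - 1‖ := by
  rw [← mul_sub_one, CStarRing.norm_coe_unitary_mul ⟨U, hU⟩]

end CStarAlgebra

theorem regulated_step_continuum_bound_general {𝓗 : Type*} [NormedAddCommGroup 𝓗]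
    [InnerProductSpace ℂ 𝓗] [CompleteSpace 𝓗]
    (H : 𝓗 →L[ℂ] 𝓗) (hH : IsSelfAdjoint H) (σ t : ℝ)
    (N : ℕ) (hN : 0 < N) (Δt : ℝ) (hΔt : Δt = t / (N : ℝ)) :
    ‖(NormedSpace.exp ((-(Complex.I * (Δt : ℂ))) • H) *
        NormedSpace.exp (((-(σ ^ 2 * Δt ^ 2 / 2) : ℝ) : ℂ) • (H * H))) ^ N -
      NormedSpace.exp ((-(Complex.I * (t : ℂ))) • H)‖ ≤
      σ ^ 2 * t ^ 2 / (2 * (N : ℝ)) * ‖H‖ ^ 2 := by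
  let +nondep : NormedAlgebra ℚ (𝓗 →L[ℂ] 𝓗) := .restrictScalars ℚ ℂ _
  have hN0 : (N : ℂ) ≠ 0 := Nat.cast_ne_zero.mpr hN.ne'
  have hcomm : Commute ((-(Complex.I * (Δt : ℂ))) • H)
      (((-(σ ^ 2 * Δt ^ 2 / 2) : ℝ) : ℂ) • (H * H)) :=
    (((Commute.refl H).mul_right (Commute.refl H)).smul_left _).smul_right _
  have hpow : (NormedSpace.exp ((-(Complex.I * (Δt : ℂ))) • H) *
        NormedSpace.exp (((-(σ ^ 2 * Δt ^ 2 / 2) : ℝ) : ℂ) • (H * H))) ^ N =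
      NormedSpace.exp ((-(Complex.I * (t : ℂ))) • H) *
        NormedSpace.exp (((-(σ ^ 2 * t ^ 2 / (2 * N)) : ℝ) : ℂ) • (H * H)) := by
    rw [exp_mul_exp_pow_of_commute hcomm, ← Nat.cast_smul_eq_nsmul ℂ,
      ← Nat.cast_smul_eq_nsmul ℂ, smul_smul, smul_smul, hΔt]
    congr 3 <;> push_cast <;> field_simp
  rw [hpow, norm_unitary_mul_sub_self (exp_neg_I_mul_smul_mem_unitary hH t)]
  exact norm_exp_neg_smul_mul_self_sub_one_le hH (by positivity)

/-- Quantitative fixed-`σ` continuum limit: with `Δt = t/N` and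
`V_N = exp(−i Δt H) · exp(−(σ² Δt²/2) H²)`, one has
`‖(V_N)^N − exp(−i t H)‖ ≤ (σ² t²/(2N)) ‖H‖²`. -/
theorem regulated_step_continuum_bound {𝓗 : Type*} [NormedAddCommGroup 𝓗]
    [InnerProductSpace ℂ 𝓗] [CompleteSpace 𝓗]
    (H : 𝓗 →L[ℂ] 𝓗) (hH : IsSelfAdjoint H) (σ t : ℝ) (ht : 0 < t)
    (N : ℕ) (hN : 0 < N) (Δt : ℝ) (hΔt : Δt = t / (N : ℝ)) :
    ‖(NormedSpace.exp ((-(Complex.I * (Δt : ℂ))) • H) *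
        NormedSpace.exp (((-(σ ^ 2 * Δt ^ 2 / 2) : ℝ) : ℂ) • (H * H))) ^ N -
      NormedSpace.exp ((-(Complex.I * (t : ℂ))) • H)‖ ≤
      σ ^ 2 * t ^ 2 / (2 * (N : ℝ)) * ‖H‖ ^ 2 :=
  regulated_step_continuum_bound_general H hH σ t N hN Δt hΔt
end

section
/- Let H be a bounded self-adjoint operator on a complex Hilbert space, let P be an orthogonal projection (P² = P, P† = P) commuting with H (HP = PH), and suppose that for some real E ≥ 0 the spectral lower bound E² ‖P ψ‖² ≤ ⟨P ψ, H² (P ψ)⟩ holds for every vector ψ. Then for all σ, Δt ∈ ℝ and every vector ψ, ‖ exp(−i Δt H) · exp(−(σ² Δt²/2) H²) (P ψ) ‖ ≤ exp(−σ² Δt² E²/2) · ‖ψ‖. -/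
open NormedSpace

/-!
The factor `exp (-(I * Δt) • H)` is unitary because its exponent is skew-adjoint, and the
orthogonal projection `P` is a contraction. For the Gaussian factor, `f t = exp (-t • H²) (P ψ)`
stays in the range of `P`, so `d/dt ‖f t‖² = -2 Re ⟪f t, H² f t⟫ ≤ -2 E² ‖f t‖²`, and Grönwall's
inequality gives `‖f t‖ ≤ exp (-E² t) ‖P ψ‖` for `t ≥ 0`.
-/

open Set RCLike in
theorem norm_le_exp_mul_norm_of_re_inner_deriv_le {𝕜 E : Type*} [RCLike 𝕜] [NormedAddCommGroup E]
    [InnerProductSpace 𝕜 E] [NormedSpace ℝ E] {f f' : ℝ → E} {r c : ℝ}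
    (hf : ∀ t, HasDerivAt f (f' t) t) (hdecay : ∀ t, re (inner 𝕜 (f t) (f' t)) ≤ -r * ‖f t‖ ^ 2)
    (hc : 0 ≤ c) : ‖f c‖ ≤ Real.exp (-(r * c)) * ‖f 0‖ := by
  have hsq : ∀ t, HasDerivAt (fun s ↦ ‖f s‖ ^ 2) (2 * re (inner 𝕜 (f t) (f' t))) t := by
    intro t
    have := (reCLM.hasFDerivAt (x := inner 𝕜 (f t) (f t))).comp_hasDerivAt t
      ((hf t).inner 𝕜 (hf t))
    simp only [Function.comp_def, reCLM_apply, inner_self_eq_norm_sq, map_add] at this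
    refine this.congr_deriv ?_
    rw [← inner_conj_symm (f' t), conj_re]; ring
  have hgron := le_gronwallBound_of_liminf_deriv_right_le (K := -2 * r) (ε := 0) (a := 0) (b := c)
    (fun t _ ↦ (hsq t).continuousAt.continuousWithinAt)
    (fun t _ _ hr ↦ (hsq t).hasDerivWithinAt.liminf_right_slope_le hr) le_rfl
    (fun t _ ↦ by linarith [hdecay t]) c (right_mem_Icc.2 hc)
  rw [gronwallBound_ε0, sub_zero] at hgron
  have : ‖f c‖ ^ 2 ≤ (Real.exp (-(r * c)) * ‖f 0‖) ^ 2 := by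
    rw [mul_pow, ← Real.exp_nat_mul, mul_comm]
    convert hgron using 3; push_cast; ring
  exact (pow_le_pow_iff_left₀ (norm_nonneg _) (by positivity) two_ne_zero).1 this

theorem norm_exp_neg_smul_apply_le_of_re_inner_ge {𝓗 : Type*} [NormedAddCommGroup 𝓗]
    [InnerProductSpace ℂ 𝓗] [CompleteSpace 𝓗] {A P : 𝓗 →L[ℂ] 𝓗} (hP : IsIdempotentElem P)
    (hAP : Commute A P) {r : ℝ} (hlow : ∀ ψ, r * ‖P ψ‖ ^ 2 ≤ (inner ℂ (P ψ) (A (P ψ))).re)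
    {c : ℝ} (hc : 0 ≤ c) (v : 𝓗) : ‖exp ((-c) • A) (P v)‖ ≤ Real.exp (-(r * c)) * ‖P v‖ := by
  set f : ℝ → 𝓗 := fun t ↦ exp (t • -A) (P v)
  have hf : ∀ t, HasDerivAt f (-A (f t)) t := fun t ↦
    ((ContinuousLinearMap.apply ℂ 𝓗 (P v)).restrictScalars ℝ).hasFDerivAt.comp_hasDerivAt t
      (hasDerivAt_exp_smul_const' (-A) t)
  have hPf : ∀ t, P (f t) = f t := fun t ↦ by
    have hcomm : Commute P (exp (t • -A)) := ((hAP.neg_left.smul_left t).exp_left).symm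
    change (P * exp (t • -A) * P) v = (exp (t • -A) * P) v
    rw [hcomm.eq, mul_assoc, hP.eq]
  have hdecay : ∀ t, (inner ℂ (f t) (-A (f t))).re ≤ -r * ‖f t‖ ^ 2 := fun t ↦ by
    have := hlow (f t)
    rw [hPf] at this
    rw [inner_neg_right, Complex.neg_re]; linarith
  simpa [f, smul_neg, neg_smul] using
    norm_le_exp_mul_norm_of_re_inner_deriv_le (𝕜 := ℂ) hf hdecay hc

theorem regulated_step_spectral_suppression_general {𝓗 : Type*} [NormedAddCommGroup 𝓗]
    [InnerProductSpace ℂ 𝓗] [CompleteSpace 𝓗]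
    (H P : 𝓗 →L[ℂ] 𝓗) (hH : IsSelfAdjoint H)
    (hProj : P * P = P) (hPsa : ContinuousLinearMap.adjoint P = P)
    (hComm : H * P = P * H)
    (E : ℝ)
    (hLow : ∀ ψ : 𝓗, E ^ 2 * ‖P ψ‖ ^ 2 ≤ (inner ℂ (P ψ) ((H * H) (P ψ)) : ℂ).re) :
    ∀ (σ Δt : ℝ) (ψ : 𝓗),
      ‖(exp ((-(Complex.I * (Δt : ℂ))) • H) *
          exp (((-(σ ^ 2 * Δt ^ 2 / 2) : ℝ) : ℂ) • (H * H))) (P ψ)‖ ≤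
        Real.exp (-(σ ^ 2 * Δt ^ 2 * E ^ 2 / 2)) * ‖ψ‖ := by
  intro σ Δt ψ
  have hunitary : exp ((-(Complex.I * (Δt : ℂ))) • H) ∈ unitary (𝓗 →L[ℂ] 𝓗) := by
    -- `exp_mem_unitary_of_mem_skewAdjoint` wants a `ℚ`-algebra, not found by instance search
    let +nondep : NormedAlgebra ℚ (𝓗 →L[ℂ] 𝓗) := .restrictScalars ℚ ℂ _
    exact exp_mem_unitary_of_mem_skewAdjoint <| hH.smul_mem_skewAdjoint <| by
      simp [skewAdjoint.mem_iff]
  have hPψ : ‖P ψ‖ ≤ ‖ψ‖ :=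
    P.le_of_opNorm_le (IsStarProjection.norm_le P ⟨hProj, P.star_eq_adjoint.trans hPsa⟩) ψ
      |>.trans_eq (one_mul _)
  have hHH : Commute (H * H) P := Commute.mul_left hComm hComm
  rw [mul_apply_eq_comp, ContinuousLinearMap.norm_map_of_mem_unitary hunitary, Complex.coe_smul]
  calc _ ≤ Real.exp (-(E ^ 2 * (σ ^ 2 * Δt ^ 2 / 2))) * ‖P ψ‖ :=
        norm_exp_neg_smul_apply_le_of_re_inner_ge hProj hHH hLow (by positivity) ψ
    _ = Real.exp (-(σ ^ 2 * Δt ^ 2 * E ^ 2 / 2)) * ‖P ψ‖ := by ring_nf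
    _ ≤ _ := by gcongr

/-- High/negative energy suppression: if `P` is an orthogonal
projection commuting with the bounded self-adjoint operator `H`, and on its range the
spectral lower bound `E² ‖P ψ‖² ≤ ⟨P ψ, H² (P ψ)⟩` holds for some `E ≥ 0`, then the
regulated step contracts the range of `P` by the Gaussian factor:
`‖exp(−i Δt H) exp(−(σ² Δt²/2) H²) (P ψ)‖ ≤ e^{−σ² Δt² E²/2} ‖ψ‖`. -/
theorem regulated_step_spectral_suppression {𝓗 : Type*} [NormedAddCommGroup 𝓗]
    [InnerProductSpace ℂ 𝓗] [CompleteSpace 𝓗]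
    (H P : 𝓗 →L[ℂ] 𝓗) (hH : IsSelfAdjoint H)
    (hProj : P * P = P) (hPsa : ContinuousLinearMap.adjoint P = P)
    (hComm : H * P = P * H)
    (E : ℝ) (hE : 0 ≤ E)
    (hLow : ∀ ψ : 𝓗, E ^ 2 * ‖P ψ‖ ^ 2 ≤ (inner ℂ (P ψ) ((H * H) (P ψ)) : ℂ).re) :
    ∀ (σ Δt : ℝ) (ψ : 𝓗),
      ‖(exp ((-(Complex.I * (Δt : ℂ))) • H) *
          exp (((-(σ ^ 2 * Δt ^ 2 / 2) : ℝ) : ℂ) • (H * H))) (P ψ)‖ ≤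
        Real.exp (-(σ ^ 2 * Δt ^ 2 * E ^ 2 / 2)) * ‖ψ‖ :=
  regulated_step_spectral_suppression_general H P hH hProj hPsa hComm E hLow
end
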